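/- Each of the ideals Q_{ij} (2 ≤ j < i ≤ n) and I_{ij} (3 ≤ j < i ≤ n) of S is prime, and the annihilator ideals satisfy Ann_S(𝔅_n') = ⋂_{2 ≤ j < i ≤ n} Q_{ij} and Ann_S(K_n) = ⋂_{3 ≤ j < i ≤ n} I_{ij}; in particular both annihilators are radical ideals. -/

import Mathlib

/-- Index set for the variables `x_{ij}` (`1 ≤ j < i ≤ n`, `0`-indexed). -/
abbrev PIdx (n : ℕ) := { p : Fin n × Fin n // p.2 < p.1 }

/-- The polynomial ring `S = ℂ[x_{ij} : j < i]`. -/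
abbrev Sn (n : ℕ) := MvPolynomial (PIdx n) ℂ

/-- Index set for the basis `r_{ijk}` (`k < j < i`). -/
abbrev TIdx (n : ℕ) := { t : Fin n × Fin n × Fin n // t.2.2 < t.2.1 ∧ t.2.1 < t.1 }

/-- The free `S`-module `F` with basis `{r_{ijk} : k < j < i}`. -/
abbrev Fn (n : ℕ) := TIdx n → Sn n

/-- The variable `x_{ij}` (for `j < i`). -/
noncomputable def Xv (n : ℕ) (i j : Fin n) (h : j < i) : Sn n := MvPolynomial.X ⟨(i, j), h⟩

/-- The basis element `r_{ijk}` of `F` (for `k < j < i`). -/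
noncomputable def rGen (n : ℕ) (i j k : Fin n) (h1 : k < j) (h2 : j < i) : Fn n :=
  Pi.single ⟨(i, j, k), h1, h2⟩ 1

/-- The generating set `B = ∪ B_{ijk}` of relations (`g₁,…,g₄, h₁,…,h₈` of the paper):
for each `k < j < i` and admissible `l₁ < k < l₂ < j < l₃ < i < l₄` and pairs `t < s`
with `{s,t} ∩ {i,j,k} = ∅`. -/
noncomputable def BSet (n : ℕ) : Set (Fn n) :=
  { w | ∃ (i j k : Fin n) (hkj : k < j) (hji : j < i),
    -- g₁
    (∃ (l : Fin n) (h1 : k < l) (h2 : l < j),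
      w = (-Xv n j k hkj - Xv n l k h1) • rGen n i j l h2 hji
          + Xv n j l h2 • rGen n i j k hkj hji) ∨
    -- g₂
    (∃ (l : Fin n) (_h1 : k < l) (h2 : l < j),
      w = Xv n j k hkj • rGen n i j l h2 hji
          + Xv n i l (h2.trans hji) • rGen n i j k hkj hji) ∨
    -- g₃
    (∃ (l : Fin n) (h1 : j < l) (h2 : l < i),
      w = -(Xv n j k hkj • rGen n i l j h1 h2)
          + Xv n i l h2 • rGen n i j k hkj hji) ∨
    -- g₄
    (∃ (l : Fin n) (h1 : i < l),
      w = Xv n j k hkj • rGen n l i j hji h1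
          + Xv n l i h1 • rGen n i j k hkj hji) ∨
    -- h₁
    (∃ (l : Fin n) (h1 : l < k),
      w = (Xv n i l (h1.trans (hkj.trans hji)) + Xv n j l (h1.trans hkj) + Xv n k l h1) •
          rGen n i j k hkj hji) ∨
    -- h₂
    (w = (Xv n i k (hkj.trans hji) + Xv n j k hkj) • rGen n i j k hkj hji) ∨
    -- h₃
    (∃ (l : Fin n) (h1 : k < l) (_h2 : l < j), w = Xv n l k h1 • rGen n i j k hkj hji) ∨
    -- h₄
    (∃ (l : Fin n) (h1 : j < l) (_h2 : l < i),
      w = Xv n l k (hkj.trans h1) • rGen n i j k hkj hji) ∨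
    -- h₅
    (∃ (l : Fin n) (h1 : j < l) (_h2 : l < i), w = Xv n l j h1 • rGen n i j k hkj hji) ∨
    -- h₆
    (∃ (l : Fin n) (h1 : i < l),
      w = Xv n l k ((hkj.trans hji).trans h1) • rGen n i j k hkj hji) ∨
    -- h₇
    (∃ (l : Fin n) (h1 : i < l), w = Xv n l j (hji.trans h1) • rGen n i j k hkj hji) ∨
    -- h₈
    (∃ (s t : Fin n) (h : t < s), s ≠ i ∧ s ≠ j ∧ s ≠ k ∧ t ≠ i ∧ t ≠ j ∧ t ≠ k ∧
      w = Xv n s t h • rGen n i j k hkj hji) }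

/-- The `S`-submodule of `F` spanned by `B`. -/
noncomputable def spanB (n : ℕ) : Submodule (Sn n) (Fn n) := Submodule.span (Sn n) (BSet n)

/-- The infinitesimal Alexander invariant `𝔅ₙ = F / span_S(B)` of `PΣₙ⁺`. -/
abbrev Bn (n : ℕ) := Fn n ⧸ spanB n

/-- The extra monomial generators `E = { x_{kp}·r_{ijk} : p < k < j < i }`. -/
noncomputable def ESet (n : ℕ) : Set (Fn n) :=
  { w | ∃ (i j k : Fin n) (hkj : k < j) (hji : j < i) (p : Fin n) (hp : p < k),
      w = Xv n k p hp • rGen n i j k hkj hji }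

/-- The `S`-submodule of `F` spanned by `B ∪ E`. -/
noncomputable def spanB' (n : ℕ) : Submodule (Sn n) (Fn n) :=
  Submodule.span (Sn n) (BSet n ∪ ESet n)

/-- The quotient module `𝔅ₙ' = F / span_S(B ∪ E)`. -/
abbrev Bn' (n : ℕ) := Fn n ⧸ spanB' n

/-- Index set for the basis `e_{ijkl}` (`l < k < j < i`). -/
abbrev QIdx (n : ℕ) :=
  { q : Fin n × Fin n × Fin n × Fin n //
      q.2.2.2 < q.2.2.1 ∧ q.2.2.1 < q.2.1 ∧ q.2.1 < q.1 }

/-- The free `S`-module `F'` with basis `{e_{ijkl} : l < k < j < i}`. -/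
abbrev F'n (n : ℕ) := QIdx n → Sn n

/-- The basis element `e_{ijkl}` of `F'`. -/
noncomputable def eGen (n : ℕ) (i j k l : Fin n) (h1 : l < k) (h2 : k < j) (h3 : j < i) :
    F'n n :=
  Pi.single ⟨(i, j, k, l), h1, h2, h3⟩ 1

/-- The generating set `{ x_{st}·e_{ijkl} : t < s, (s,t) ≠ (i,j) }`. -/
noncomputable def JSet (n : ℕ) : Set (F'n n) :=
  { w | ∃ (i j k l : Fin n) (h1 : l < k) (h2 : k < j) (h3 : j < i)
      (s t : Fin n) (hts : t < s), (s, t) ≠ (i, j) ∧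
      w = Xv n s t hts • eGen n i j k l h1 h2 h3 }

/-- The `S`-submodule of `F'` spanned by the set above. -/
noncomputable def spanJ (n : ℕ) : Submodule (Sn n) (F'n n) := Submodule.span (Sn n) (JSet n)

/-- The module `Kₙ = F' / span_S{x_{st}·e_{ijkl} : (s,t) ≠ (i,j)}`. -/
abbrev Kn (n : ℕ) := F'n n ⧸ spanJ n

/-- The prime ideal `Q_{ij}` generated by the linear forms `x_{il} + x_{jl}` (`l < j`),
`x_{il}` (`j < l < i`), and `x_{st}` (`t < s`, `s ∉ {i,j}`). -/
noncomputable def Qideal (n : ℕ) (i j : Fin n) (hji : j < i) : Ideal (Sn n) :=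
  Ideal.span { p |
    (∃ (l : Fin n) (h : l < j), p = Xv n i l (h.trans hji) + Xv n j l h) ∨
    (∃ (l : Fin n) (_h1 : j < l) (h2 : l < i), p = Xv n i l h2) ∨
    (∃ (s t : Fin n) (h : t < s), s ≠ i ∧ s ≠ j ∧ p = Xv n s t h) }

/-- The prime ideal `I_{ij}` generated by all the variables `x_{st}` with
`(s,t) ≠ (i,j)`. -/
noncomputable def Iideal (n : ℕ) (i j : Fin n) : Ideal (Sn n) :=
  Ideal.span { p | ∃ (s t : Fin n) (h : t < s), (s, t) ≠ (i, j) ∧ p = Xv n s t h }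

namespace MvPolynomial

variable {σ R : Type*} [CommRing R]

theorem ker_eq_of_le_of_X_sub_mem {φ : MvPolynomial σ R →ₐ[R] MvPolynomial σ R}
    {I : Ideal (MvPolynomial σ R)} (hI : I ≤ RingHom.ker φ) (hX : ∀ v, X v - φ (X v) ∈ I) :
    RingHom.ker φ = I := by
  refine le_antisymm (fun p hp => ?_) hI
  have hφ : (Ideal.Quotient.mkₐ R I).comp φ = Ideal.Quotient.mkₐ R I :=
    algHom_ext fun v => ((Ideal.Quotient.mk_eq_mk_iff_sub_mem _ _).2 (hX v)).symm
  rw [← Ideal.Quotient.eq_zero_iff_mem, ← Ideal.Quotient.mkₐ_eq_mk R, ← hφ]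
  simp [RingHom.mem_ker.1 hp]

end MvPolynomial

section Annihilator

variable {R M : Type*} [CommRing R] [AddCommGroup M] [Module R M] {N : Submodule R M}

theorem Module.annihilator_quotient_le_of_linearMap {P : Ideal R} (hP : P.IsPrime)
    (f : M →ₗ[R] R) (hf : N ≤ Submodule.comap f P) {m : M} (hm : f m ∉ P) :
    Module.annihilator R (M ⧸ N) ≤ P := by
  intro p hp
  have hpm : p • m ∈ N := by
    rw [← Submodule.Quotient.mk_eq_zero, Submodule.Quotient.mk_smul]
    exact Module.mem_annihilator.1 hp _
  have := hf hpm
  rw [Submodule.mem_comap, map_smul, smul_eq_mul] at this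
  exact (hP.mem_or_mem this).resolve_right hm

theorem Module.le_annihilator_quotient_pi {ι : Type*} [Finite ι] [DecidableEq ι]
    {N : Submodule R (ι → R)} {I : Ideal R}
    (h : ∀ t, ∀ p ∈ I, p • Pi.single t (1 : R) ∈ N) :
    I ≤ Module.annihilator R ((ι → R) ⧸ N) := by
  intro p hp
  have hN : ⊤ ≤ N.comap (p • LinearMap.id) := by
    rw [← (Pi.basisFun R ι).span_eq, Submodule.span_le]
    rintro _ ⟨t, rfl⟩
    simpa using h t p hp
  refine Module.mem_annihilator.2 fun m => ?_
  obtain ⟨f, rfl⟩ := Submodule.Quotient.mk_surjective _ m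
  rw [← Submodule.Quotient.mk_smul, Submodule.Quotient.mk_eq_zero]
  simpa using hN Submodule.mem_top (x := f)

end Annihilator

variable {n : ℕ}

noncomputable def retractQ (n : ℕ) (i j : Fin n) (hji : j < i) : Sn n →ₐ[ℂ] Sn n :=
  MvPolynomial.aeval fun v =>
    if v.1.1 = i then (if v.1.2 ≤ j then MvPolynomial.X v else 0)
    else if h : v.1.1 = j then -MvPolynomial.X ⟨(i, v.1.2), (v.2.trans_eq h).trans hji⟩
    else 0

section retractQ

variable {i j : Fin n} (hji : j < i)

theorem add_Xv_mem_Qideal {l : Fin n} (hlj : l < j) :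
    Xv n i l (hlj.trans hji) + Xv n j l hlj ∈ Qideal n i j hji :=
  Ideal.subset_span <| .inl ⟨l, hlj, rfl⟩

theorem Xv_mem_Qideal_of_lt {l : Fin n} (hjl : j < l) (hli : l < i) :
    Xv n i l hli ∈ Qideal n i j hji :=
  Ideal.subset_span <| .inr <| .inl ⟨l, hjl, hli, rfl⟩

theorem Xv_mem_Qideal_of_ne {s t : Fin n} (hsi : s ≠ i) (hsj : s ≠ j) (hts : t < s) :
    Xv n s t hts ∈ Qideal n i j hji :=
  Ideal.subset_span <| .inr <| .inr ⟨s, t, hts, hsi, hsj, rfl⟩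

theorem retractQ_Xv_of_le {l : Fin n} (hlj : l ≤ j) (hli : l < i) :
    retractQ n i j hji (Xv n i l hli) = Xv n i l hli := by
  simp [retractQ, Xv, hlj]

theorem retractQ_Xv_of_lt {l : Fin n} (hjl : j < l) (hli : l < i) :
    retractQ n i j hji (Xv n i l hli) = 0 := by
  simp [retractQ, Xv, not_le.2 hjl]

theorem retractQ_Xv_snd {l : Fin n} (hlj : l < j) :
    retractQ n i j hji (Xv n j l hlj) = -Xv n i l (hlj.trans hji) := by
  simp [retractQ, Xv, hji.ne]

theorem retractQ_Xv_of_ne {s t : Fin n} (hsi : s ≠ i) (hsj : s ≠ j) (hts : t < s) :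
    retractQ n i j hji (Xv n s t hts) = 0 := by
  simp [retractQ, Xv, hsi, hsj]

theorem ker_retractQ : RingHom.ker (retractQ n i j hji) = Qideal n i j hji := by
  refine MvPolynomial.ker_eq_of_le_of_X_sub_mem ?_ ?_
  · rw [Qideal, Ideal.span_le]
    rintro p (⟨l, hlj, rfl⟩ | ⟨l, hjl, hli, rfl⟩ | ⟨s, t, hts, hsi, hsj, rfl⟩)
    · simp [retractQ_Xv_of_le hji hlj.le, retractQ_Xv_snd hji]
    · exact retractQ_Xv_of_lt hji hjl hli
    · exact retractQ_Xv_of_ne hji hsi hsj hts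
  · rintro ⟨⟨s, t⟩, hts⟩
    change Xv n s t hts - retractQ n i j hji (Xv n s t hts) ∈ Qideal n i j hji
    by_cases hsi : s = i
    · subst hsi
      rcases le_or_gt t j with htj | hjt
      · simp [retractQ_Xv_of_le hji htj]
      · rw [retractQ_Xv_of_lt hji hjt, sub_zero]
        exact Xv_mem_Qideal_of_lt hji hjt hts
    by_cases hsj : s = j
    · subst hsj
      rw [retractQ_Xv_snd hji, sub_neg_eq_add, add_comm]
      exact add_Xv_mem_Qideal hji hts
    · rw [retractQ_Xv_of_ne hji hsi hsj, sub_zero]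
      exact Xv_mem_Qideal_of_ne hji hsi hsj hts

theorem Qideal_isPrime : (Qideal n i j hji).IsPrime :=
  ker_retractQ hji ▸ RingHom.ker_isPrime _

theorem Xv_notMem_Qideal {k : Fin n} (hkj : k < j) :
    Xv n i k (hkj.trans hji) ∉ Qideal n i j hji := by
  rw [← ker_retractQ hji, RingHom.mem_ker, retractQ_Xv_of_le hji hkj.le]
  exact MvPolynomial.X_ne_zero _

end retractQ

noncomputable def retractI (n : ℕ) (i j : Fin n) (hji : j < i) : Sn n →ₐ[ℂ] Sn n :=
  MvPolynomial.aeval fun v => if v = ⟨(i, j), hji⟩ then MvPolynomial.X v else 0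

theorem ker_retractI {i j : Fin n} (hji : j < i) :
    RingHom.ker (retractI n i j hji) = Iideal n i j := by
  refine MvPolynomial.ker_eq_of_le_of_X_sub_mem ?_ ?_
  · rw [Iideal, Ideal.span_le]
    rintro p ⟨s, t, hts, hne, rfl⟩
    simp_all [retractI, Xv]
  · rintro ⟨⟨s, t⟩, hts⟩
    by_cases hst : (s, t) = (i, j)
    · simp_all [retractI]
    · have : Xv n s t hts ∈ Iideal n i j := Ideal.subset_span ⟨s, t, hts, hst, rfl⟩
      simpa [retractI, Xv, hst] using this

theorem Iideal_isPrime {i j : Fin n} (hji : j < i) : (Iideal n i j).IsPrime :=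
  ker_retractI hji ▸ RingHom.ker_isPrime _

section Relations

variable {i j k : Fin n} (hkj : k < j) (hji : j < i)

theorem g₁_mem_spanB' {l : Fin n} (hkl : k < l) (hlj : l < j) :
    (-Xv n j k hkj - Xv n l k hkl) • rGen n i j l hlj hji
      + Xv n j l hlj • rGen n i j k hkj hji ∈ spanB' n :=
  Submodule.subset_span <| .inl ⟨i, j, k, hkj, hji, .inl ⟨l, hkl, hlj, rfl⟩⟩

theorem g₂_mem_spanB' {l : Fin n} (hkl : k < l) (hlj : l < j) :
    Xv n j k hkj • rGen n i j l hlj hji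
      + Xv n i l (hlj.trans hji) • rGen n i j k hkj hji ∈ spanB' n :=
  Submodule.subset_span <| .inl ⟨i, j, k, hkj, hji, .inr <| .inl ⟨l, hkl, hlj, rfl⟩⟩

theorem g₃_mem_spanB' {l : Fin n} (hjl : j < l) (hli : l < i) :
    -(Xv n j k hkj • rGen n i l j hjl hli) + Xv n i l hli • rGen n i j k hkj hji ∈ spanB' n :=
  Submodule.subset_span <| .inl ⟨i, j, k, hkj, hji, .inr <| .inr <| .inl ⟨l, hjl, hli, rfl⟩⟩

theorem g₄_mem_spanB' {l : Fin n} (hil : i < l) :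
    Xv n j k hkj • rGen n l i j hji hil + Xv n l i hil • rGen n i j k hkj hji ∈ spanB' n :=
  Submodule.subset_span <| .inl ⟨i, j, k, hkj, hji, .inr <| .inr <| .inr <| .inl
    ⟨l, hil, rfl⟩⟩

theorem h₁_mem_spanB' {l : Fin n} (hlk : l < k) :
    (Xv n i l (hlk.trans (hkj.trans hji)) + Xv n j l (hlk.trans hkj) + Xv n k l hlk) •
      rGen n i j k hkj hji ∈ spanB' n :=
  Submodule.subset_span <| .inl ⟨i, j, k, hkj, hji, .inr <| .inr <| .inr <| .inr <| .inl
    ⟨l, hlk, rfl⟩⟩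

theorem h₂_mem_spanB' :
    (Xv n i k (hkj.trans hji) + Xv n j k hkj) • rGen n i j k hkj hji ∈ spanB' n :=
  Submodule.subset_span <| .inl ⟨i, j, k, hkj, hji, .inr <| .inr <| .inr <| .inr <| .inr <|
    .inl rfl⟩

theorem h₃₄₆_mem_spanB' {s : Fin n} (hsi : s ≠ i) (hsj : s ≠ j) (hks : k < s) :
    Xv n s k hks • rGen n i j k hkj hji ∈ spanB' n := by
  rcases lt_or_gt_of_ne hsj with hsj | hjs
  · exact Submodule.subset_span <| .inl ⟨i, j, k, hkj, hji, .inr <| .inr <| .inr <| .inr <|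
      .inr <| .inr <| .inl ⟨s, hks, hsj, rfl⟩⟩
  rcases lt_or_gt_of_ne hsi with hsi | his
  · exact Submodule.subset_span <| .inl ⟨i, j, k, hkj, hji, .inr <| .inr <| .inr <| .inr <|
      .inr <| .inr <| .inr <| .inl ⟨s, hjs, hsi, rfl⟩⟩
  · exact Submodule.subset_span <| .inl ⟨i, j, k, hkj, hji, .inr <| .inr <| .inr <| .inr <|
      .inr <| .inr <| .inr <| .inr <| .inr <| .inl ⟨s, his, rfl⟩⟩

theorem h₅₇_mem_spanB' {s : Fin n} (hsi : s ≠ i) (hjs : j < s) :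
    Xv n s j hjs • rGen n i j k hkj hji ∈ spanB' n := by
  rcases lt_or_gt_of_ne hsi with hsi | his
  · exact Submodule.subset_span <| .inl ⟨i, j, k, hkj, hji, .inr <| .inr <| .inr <| .inr <|
      .inr <| .inr <| .inr <| .inr <| .inl ⟨s, hjs, hsi, rfl⟩⟩
  · exact Submodule.subset_span <| .inl ⟨i, j, k, hkj, hji, .inr <| .inr <| .inr <| .inr <|
      .inr <| .inr <| .inr <| .inr <| .inr <| .inr <| .inl ⟨s, his, rfl⟩⟩

theorem h₈_mem_spanB' {s t : Fin n} (hts : t < s) (hsi : s ≠ i) (hsj : s ≠ j) (hsk : s ≠ k)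
    (hti : t ≠ i) (htj : t ≠ j) (htk : t ≠ k) :
    Xv n s t hts • rGen n i j k hkj hji ∈ spanB' n :=
  Submodule.subset_span <| .inl ⟨i, j, k, hkj, hji, .inr <| .inr <| .inr <| .inr <| .inr <|
    .inr <| .inr <| .inr <| .inr <| .inr <| .inr
    ⟨s, t, hts, hsi, hsj, hsk, hti, htj, htk, rfl⟩⟩

theorem e_mem_spanB' {p : Fin n} (hpk : p < k) :
    Xv n k p hpk • rGen n i j k hkj hji ∈ spanB' n :=
  Submodule.subset_span <| .inr ⟨i, j, k, hkj, hji, p, hpk, rfl⟩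

end Relations

theorem smul_rGen_mem_spanB' {i j k : Fin n} (hkj : k < j) (hji : j < i) {p : Sn n}
    (hp : p ∈ Qideal n i j hji) : p • rGen n i j k hkj hji ∈ spanB' n := by
  suffices Qideal n i j hji ≤ (spanB' n).comap (LinearMap.toSpanSingleton (Sn n) (Fn n)
      (rGen n i j k hkj hji)) from this hp
  rw [Qideal, Ideal.span_le]
  rintro p (⟨l, hlj, rfl⟩ | ⟨l, hjl, hli, rfl⟩ | ⟨s, t, hts, hsi, hsj, rfl⟩) <;>
    simp only [SetLike.mem_coe, Submodule.mem_comap, LinearMap.toSpanSingleton_apply]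
  · rcases lt_trichotomy l k with hlk | rfl | hkl
    · convert sub_mem (h₁_mem_spanB' hkj hji hlk) (e_mem_spanB' hkj hji hlk) using 1
      module
    · exact h₂_mem_spanB' hkj hji
    · convert add_mem (add_mem (g₁_mem_spanB' hkj hji hkl hlj) (g₂_mem_spanB' hkj hji hkl hlj))
        (e_mem_spanB' hlj hji hkl) using 1
      module
  · convert add_mem (g₃_mem_spanB' hkj hji hjl hli) (e_mem_spanB' hjl hli hkj) using 1
    module
  · by_cases hsk : s = k
    · subst hsk
      exact e_mem_spanB' hkj hji hts
    by_cases hti : t = i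
    · subst hti
      convert sub_mem (g₄_mem_spanB' hkj hji hts) (e_mem_spanB' hji hts hkj) using 1
      module
    by_cases htj : t = j
    · subst htj
      exact h₅₇_mem_spanB' hkj hji hsi hts
    by_cases htk : t = k
    · subst htk
      exact h₃₄₆_mem_spanB' hkj hji hsi hsj hts
    exact h₈_mem_spanB' hkj hji hts hsi hsj hsk hti htj htk

noncomputable def coeffQ (n : ℕ) (i j : Fin n) : Fn n →ₗ[Sn n] Sn n :=
  Fintype.linearCombination (Sn n) fun t =>
    if t.1.1 = i ∧ t.1.2.1 = j then Xv n t.1.1 t.1.2.2 (t.2.1.trans t.2.2) else 0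

section coeffQ

variable {i j : Fin n}

theorem coeffQ_smul_rGen_self {k : Fin n} (hkj : k < j) (hji : j < i) (a : Sn n) :
    coeffQ n i j (a • rGen n i j k hkj hji) = a * Xv n i k (hkj.trans hji) := by
  simp [coeffQ, rGen]

theorem coeffQ_smul_rGen_of_ne {I J K : Fin n} (hKJ : K < J) (hJI : J < I) (h : ¬(I = i ∧ J = j))
    (a : Sn n) : coeffQ n i j (a • rGen n I J K hKJ hJI) = 0 := by
  simp [coeffQ, rGen, h]

variable (hji : j < i)

theorem coeffQ_smul_rGen_mem {I J K : Fin n} {hKJ : K < J} {hJI : J < I} {a : Sn n}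
    (ha : a ∈ Qideal n I J hJI) :
    coeffQ n i j (a • rGen n I J K hKJ hJI) ∈ Qideal n i j hji := by
  by_cases h : I = i ∧ J = j
  · obtain ⟨rfl, rfl⟩ := h
    rw [coeffQ_smul_rGen_self]
    exact Ideal.mul_mem_right _ _ ha
  · rw [coeffQ_smul_rGen_of_ne hKJ hJI h]
    exact zero_mem _

theorem coeffQ_mem_Qideal {w : Fn n} (hw : w ∈ BSet n ∪ ESet n) :
    coeffQ n i j w ∈ Qideal n i j hji := by
  rcases hw with ⟨I, J, K, hKJ, hJI, hw⟩ | ⟨I, J, K, hKJ, hJI, p, hpK, rfl⟩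
  swap
  · exact coeffQ_smul_rGen_mem hji (Xv_mem_Qideal_of_ne hJI (hKJ.trans hJI).ne hKJ.ne hpK)
  rcases hw with ⟨l, hKl, hlJ, rfl⟩ | ⟨l, hKl, hlJ, rfl⟩ | ⟨l, hJl, hlI, rfl⟩ |
    ⟨l, hIl, rfl⟩ | ⟨l, hlK, rfl⟩ | rfl | ⟨l, hKl, hlJ, rfl⟩ | ⟨l, hJl, hlI, rfl⟩ |
    ⟨l, hJl, hlI, rfl⟩ | ⟨l, hIl, rfl⟩ | ⟨l, hIl, rfl⟩ |
    ⟨s, t, hts, hsI, hsJ, -, -, -, -, rfl⟩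
  case inl.inl | inl.inr.inl =>
    by_cases h : I = i ∧ J = j
    · obtain ⟨rfl, rfl⟩ := h
      rw [← ker_retractQ hji, RingHom.mem_ker]
      simp only [map_add, map_mul, map_sub, map_neg, coeffQ_smul_rGen_self, retractQ_Xv_snd hji,
        retractQ_Xv_of_le hji hlJ.le, retractQ_Xv_of_le hji hKJ.le,
        retractQ_Xv_of_ne hji (hlJ.trans hji).ne hlJ.ne hKl]
      ring
    · simp only [map_add, coeffQ_smul_rGen_of_ne _ _ h, add_zero, zero_mem]
  · rw [map_add, map_neg]
    refine add_mem (neg_mem (coeffQ_smul_rGen_mem hji ?_)) (coeffQ_smul_rGen_mem hji ?_)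
    · exact Xv_mem_Qideal_of_ne hlI (hJl.trans hlI).ne hJl.ne hKJ
    · exact Xv_mem_Qideal_of_lt hJI hJl hlI
  · rw [map_add]
    refine add_mem (coeffQ_smul_rGen_mem hji ?_) (coeffQ_smul_rGen_mem hji ?_)
    · exact Xv_mem_Qideal_of_ne hIl (hJI.trans hIl).ne hJI.ne hKJ
    · exact Xv_mem_Qideal_of_ne hJI hIl.ne' (hJI.trans hIl).ne' hIl
  all_goals refine coeffQ_smul_rGen_mem hji ?_
  · exact add_mem (add_Xv_mem_Qideal hJI (hlK.trans hKJ))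
      (Xv_mem_Qideal_of_ne hJI (hKJ.trans hJI).ne hKJ.ne hlK)
  · exact add_Xv_mem_Qideal hJI hKJ
  · exact Xv_mem_Qideal_of_ne hJI (hlJ.trans hJI).ne hlJ.ne hKl
  · exact Xv_mem_Qideal_of_ne hJI hlI.ne hJl.ne' (hKJ.trans hJl)
  · exact Xv_mem_Qideal_of_ne hJI hlI.ne hJl.ne' hJl
  · exact Xv_mem_Qideal_of_ne hJI hIl.ne' (hJI.trans hIl).ne' ((hKJ.trans hJI).trans hIl)
  · exact Xv_mem_Qideal_of_ne hJI hIl.ne' (hJI.trans hIl).ne' (hJI.trans hIl)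
  · exact Xv_mem_Qideal_of_ne hJI hsI hsJ hts

theorem spanB'_le_comap_coeffQ : spanB' n ≤ Submodule.comap (coeffQ n i j) (Qideal n i j hji) :=
  Submodule.span_le.2 fun _ => coeffQ_mem_Qideal hji

end coeffQ

theorem annihilator_Bn' :
    Module.annihilator (Sn n) (Bn' n) =
      ⨅ (i : Fin n) (j : Fin n) (hji : j < i) (_ : 1 ≤ j.val), Qideal n i j hji := by
  refine le_antisymm (le_iInf₂ fun i j => le_iInf₂ fun hji hj => ?_) ?_
  · have h0j : (⟨0, by omega⟩ : Fin n) < j := Fin.lt_def.2 hj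
    refine Module.annihilator_quotient_le_of_linearMap (Qideal_isPrime hji) _
      (spanB'_le_comap_coeffQ hji) (m := rGen n i j _ h0j hji) ?_
    rw [← one_smul (Sn n) (rGen n i j _ h0j hji), coeffQ_smul_rGen_self, one_mul]
    exact Xv_notMem_Qideal hji h0j
  · refine Module.le_annihilator_quotient_pi fun ⟨⟨i, j, k⟩, hkj, hji⟩ p hp => ?_
    simp only [Submodule.mem_iInf] at hp
    exact smul_rGen_mem_spanB' hkj hji (hp i j hji (Nat.one_le_of_lt hkj))

theorem smul_eGen_mem_spanJ {i j k l : Fin n} (hlk : l < k) (hkj : k < j) (hji : j < i)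
    {p : Sn n} (hp : p ∈ Iideal n i j) : p • eGen n i j k l hlk hkj hji ∈ spanJ n := by
  suffices Iideal n i j ≤ (spanJ n).comap (LinearMap.toSpanSingleton (Sn n) (F'n n)
      (eGen n i j k l hlk hkj hji)) from this hp
  rw [Iideal, Ideal.span_le]
  rintro _ ⟨s, t, hts, hst, rfl⟩
  exact Submodule.subset_span ⟨i, j, k, l, hlk, hkj, hji, s, t, hts, hst, rfl⟩

theorem spanJ_le_comap_proj (q : QIdx n) :
    spanJ n ≤ Submodule.comap (LinearMap.proj q) (Iideal n q.1.1 q.1.2.1) := by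
  rw [spanJ, Submodule.span_le]
  rintro _ ⟨i, j, k, l, hlk, hkj, hji, s, t, hts, hst, rfl⟩
  by_cases hq : q = (⟨(i, j, k, l), hlk, hkj, hji⟩ : QIdx n)
  · subst hq
    have : Xv n s t hts ∈ Iideal n i j := Ideal.subset_span ⟨s, t, hts, hst, rfl⟩
    simpa [eGen] using this
  · simp [eGen, hq]

theorem annihilator_Kn :
    Module.annihilator (Sn n) (Kn n) =
      ⨅ (i : Fin n) (j : Fin n) (_ : j < i) (_ : 2 ≤ j.val), Iideal n i j := by
  refine le_antisymm (le_iInf₂ fun i j => le_iInf₂ fun hji hj => ?_) ?_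
  · have h01 : (⟨0, by omega⟩ : Fin n) < ⟨1, by omega⟩ := Fin.lt_def.2 one_pos
    have h1j : (⟨1, by omega⟩ : Fin n) < j := Fin.lt_def.2 hj
    refine Module.annihilator_quotient_le_of_linearMap (Iideal_isPrime hji) _
      (spanJ_le_comap_proj ⟨(i, j, _, _), h01, h1j, hji⟩) (m := eGen n i j _ _ h01 h1j hji) ?_
    simpa [eGen] using (Iideal_isPrime hji).one_notMem
  · refine Module.le_annihilator_quotient_pi fun ⟨⟨i, j, k, l⟩, hlk, hkj, hji⟩ p hp => ?_
    simp only [Submodule.mem_iInf] at hp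
    exact smul_eGen_mem_spanJ hlk hkj hji (hp i j hji (by dsimp only at hlk hkj; omega))

theorem annihilators_radical_general (n : ℕ) :
    (∀ (i j : Fin n) (hji : j < i), 1 ≤ j.val → (Qideal n i j hji).IsPrime) ∧
    (∀ (i j : Fin n), j < i → 2 ≤ j.val → (Iideal n i j).IsPrime) ∧
    Module.annihilator (Sn n) (Bn' n) =
      (⨅ (i : Fin n) (j : Fin n) (hji : j < i) (_ : 1 ≤ j.val), Qideal n i j hji) ∧
    Module.annihilator (Sn n) (Kn n) =
      (⨅ (i : Fin n) (j : Fin n) (_ : j < i) (_ : 2 ≤ j.val), Iideal n i j) ∧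
    (Module.annihilator (Sn n) (Bn' n)).IsRadical ∧
    (Module.annihilator (Sn n) (Kn n)).IsRadical := by
  refine ⟨fun i j hji _ => Qideal_isPrime hji, fun i j hji _ => Iideal_isPrime hji,
    annihilator_Bn', annihilator_Kn, ?_, ?_⟩
  · rw [annihilator_Bn']
    exact Ideal.isRadical_iInf _ fun i => Ideal.isRadical_iInf _ fun j =>
      Ideal.isRadical_iInf _ fun hji => Ideal.isRadical_iInf _ fun _ =>
        (Qideal_isPrime hji).isRadical
  · rw [annihilator_Kn]
    exact Ideal.isRadical_iInf _ fun i => Ideal.isRadical_iInf _ fun j =>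
      Ideal.isRadical_iInf _ fun hji => Ideal.isRadical_iInf _ fun _ =>
        (Iideal_isPrime hji).isRadical

/-- The ideals `Q_{ij}` (`2 ≤ j < i ≤ n`, i.e. `1 ≤ j.val`) and `I_{ij}`
(`3 ≤ j < i ≤ n`, i.e. `2 ≤ j.val`) are prime, `Ann_S(𝔅ₙ') = ⋂ Q_{ij}`,
`Ann_S(Kₙ) = ⋂ I_{ij}`; in particular both annihilators are radical ideals. -/
theorem annihilators_radical (n : ℕ) (hn : 4 ≤ n) :
    (∀ (i j : Fin n) (hji : j < i), 1 ≤ j.val → (Qideal n i j hji).IsPrime) ∧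
    (∀ (i j : Fin n), j < i → 2 ≤ j.val → (Iideal n i j).IsPrime) ∧
    Module.annihilator (Sn n) (Bn' n) =
      (⨅ (i : Fin n) (j : Fin n) (hji : j < i) (_ : 1 ≤ j.val), Qideal n i j hji) ∧
    Module.annihilator (Sn n) (Kn n) =
      (⨅ (i : Fin n) (j : Fin n) (_ : j < i) (_ : 2 ≤ j.val), Iideal n i j) ∧
    (Module.annihilator (Sn n) (Bn' n)).IsRadical ∧
    (Module.annihilator (Sn n) (Kn n)).IsRadical :=
  annihilators_radical_general n
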